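/- Let v and ρ be n×n Hermitian complex matrices. Then Tr(vρvρ) is a real number satisfying Tr(vρvρ) ≤ Tr(v²ρ²). Consequently, for the quantum Gaussian semigroup generator L(ρ) := −v²⊙ρ + vρv (with v²⊙ρ = (v²ρ + ρv²)/2), one has Tr(L(ρ)·ρ) ≤ 0 for every Hermitian ρ, i.e. the purity F(ρ) = Tr(ρ²)/2 is a LaSalle function for quantum Gaussian semigroups. -/

import Mathlib

open Matrix
open scoped ComplexOrder

/-- The Jordan product of two complex matrices: `x ⊙ y = (xy + yx)/2`. -/
noncomputable def jordanProd {n : ℕ} (x y : Matrix (Fin n) (Fin n) ℂ) :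
    Matrix (Fin n) (Fin n) ℂ :=
  (1 / 2 : ℂ) • (x * y + y * x)

/-!
With `c = vρ - ρv`, cyclicity of the trace gives `Tr(cᴴc) = 2 (Tr(v²ρ²) - Tr(vρvρ))`, and
`Tr(cᴴc) ≥ 0`: this is the Hilbert–Schmidt Cauchy–Schwarz inequality for `ρv` and `vρ`.
`Tr(vρvρ)` is real as the trace of the product of the Hermitian matrices `vρv` and `ρ`, and
`Tr(L(ρ)ρ) = Tr(vρvρ) - Tr(v²ρ²)` by cyclicity again.
-/

namespace Matrix

variable {m R : Type*} [Fintype m]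

theorem IsHermitian.isSelfAdjoint_trace_mul [CommSemiring R] [StarRing R]
    {A B : Matrix m m R} (hA : A.IsHermitian) (hB : B.IsHermitian) :
    IsSelfAdjoint (A * B).trace := by
  rw [IsSelfAdjoint, ← trace_conjTranspose, conjTranspose_mul, hA.eq, hB.eq, trace_mul_comm]

theorem trace_conjTranspose_mul_self_commutator [CommRing R] [StarRing R]
    {A B : Matrix m m R} (hA : A.IsHermitian) (hB : B.IsHermitian) :
    ((A * B - B * A)ᴴ * (A * B - B * A)).trace =
      2 * ((A * A * (B * B)).trace - (A * B * A * B).trace) := by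
  have hAABB : (A * A * B * B).trace = (B * A * A * B).trace := by
    rw [trace_mul_cycle, ← Matrix.mul_assoc]
  have hABBA : (A * B * B * A).trace = (A * A * B * B).trace := by
    rw [trace_mul_cycle, ← Matrix.mul_assoc]
  have hBABA : (B * A * B * A).trace = (A * B * A * B).trace := by
    rw [trace_mul_cycle, ← Matrix.mul_assoc]
  rw [conjTranspose_sub, conjTranspose_mul, conjTranspose_mul, hA.eq, hB.eq]
  simp only [Matrix.sub_mul, Matrix.mul_sub, ← Matrix.mul_assoc, trace_sub, hABBA, hBABA, hAABB]
  ring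

theorem trace_mul_mul_mul_le_trace_mul_self_mul_mul_self {A B : Matrix m m ℂ}
    (hA : A.IsHermitian) (hB : B.IsHermitian) :
    (A * B * A * B).trace ≤ (A * A * (B * B)).trace := by
  have hnonneg := (posSemidef_conjTranspose_mul_self (A * B - B * A)).trace_nonneg
  rw [trace_conjTranspose_mul_self_commutator hA hB] at hnonneg
  exact sub_nonneg.mp (le_of_mul_le_mul_left (by simpa using hnonneg) two_pos)

end Matrix

noncomputable def gaussianGenerator {n : ℕ} (v ρ : Matrix (Fin n) (Fin n) ℂ) :
    Matrix (Fin n) (Fin n) ℂ :=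
  -jordanProd (v * v) ρ + v * ρ * v

theorem trace_gaussianGenerator_mul {n : ℕ} (v ρ : Matrix (Fin n) (Fin n) ℂ) :
    (gaussianGenerator v ρ * ρ).trace = (v * ρ * v * ρ).trace - (v * v * (ρ * ρ)).trace := by
  have hcycle : (v * v * ρ * ρ).trace = (ρ * v * v * ρ).trace := by
    rw [trace_mul_cycle, ← Matrix.mul_assoc]
  simp only [gaussianGenerator, jordanProd, Matrix.add_mul, Matrix.neg_mul, Matrix.smul_mul,
    ← Matrix.mul_assoc, trace_add, trace_neg, trace_smul, smul_eq_mul, ← hcycle]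
  ring

/-- For Hermitian `v` and `ρ`, `Tr(vρvρ)` is a real number with
`Tr(vρvρ) ≤ Tr(v²ρ²)`.  Consequently, for the quantum Gaussian semigroup generator
`L(ρ) = −v²⊙ρ + vρv`, one has `Tr(L(ρ)·ρ) ≤ 0` for every Hermitian `ρ`: the purity
`F(ρ) = Tr(ρ²)/2` is a LaSalle function for quantum Gaussian semigroups. -/
theorem purity_lasalle_quantum_gaussian {n : ℕ}
    (v ρ : Matrix (Fin n) (Fin n) ℂ) (hv : v.IsHermitian) (hρ : ρ.IsHermitian) :
    (Matrix.trace (v * ρ * v * ρ)).im = 0 ∧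
    Matrix.trace (v * ρ * v * ρ) ≤ Matrix.trace (v * v * (ρ * ρ)) ∧
    Matrix.trace ((-jordanProd (v * v) ρ + v * ρ * v) * ρ) ≤ 0 := by
  have hvρv : (v * ρ * v).IsHermitian := by
    simpa only [hv.eq] using isHermitian_mul_mul_conjTranspose v hρ
  have hle := trace_mul_mul_mul_le_trace_mul_self_mul_mul_self hv hρ
  refine ⟨(Complex.im_eq_zero_iff_isSelfAdjoint _).mpr (hvρv.isSelfAdjoint_trace_mul hρ), hle, ?_⟩
  exact (trace_gaussianGenerator_mul v ρ).trans_le (sub_nonpos.mpr hle)
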